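/- arXiv:2502.09047 — 4 statements merged into one kernel-verified Lean document; each statement's English description precedes it below -/
import Mathlib

section
/- Let x be a random vector in ℝ^d with S = E[x xᵀ], and suppose there is ψ ≥ 1 such that E[x xᵀ A x xᵀ] ⪯ ψ tr(S A) S for every positive semi-definite d×d matrix A. Fix scalars δ, q and define the random 2d×2d block matrix Ĝ = [[0, δ x xᵀ],[0, q x xᵀ]]. Then for every positive semi-definite 2d×2d matrix M, E[Ĝ M Ĝᵀ] ⪯ ψ · ⟨[[0,0],[0,S]], M⟩ · [[δ² S, δq S],[δq S, q² S]]. -/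
/-!
Write `Ĝ = w eᵀ` with `w = (δx, qx)` and `e = (0, x)`. Then `Ĝ M Ĝᵀ = (xᵀ D x) w wᵀ`, where
`D` is the lower-right block of `M`, and `w wᵀ = [[δ², δq], [δq, q²]] ⊗ x xᵀ`. Taking
expectations entry by entry, the matrix in the claim is
`[[δ², δq], [δq, q²]] ⊗ (ψ tr(S D) S - E[(xᵀ D x) x xᵀ])`, the fourth-moment hypothesis at
`A = D` tensored with a rank-one positive semidefinite `2 × 2` matrix; such a Kronecker product
is `Kᵀ R K` with `K = [δ I, q I]`.
-/

open Matrix MeasureTheory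

noncomputable section

/-- The trace inner product `⟨A, B⟩ = tr (Aᵀ B)` for `2d × 2d` (block-indexed) matrices. -/
def traceInner2 {d : ℕ} (A B : Matrix (Fin d ⊕ Fin d) (Fin d ⊕ Fin d) ℝ) : ℝ :=
  (Aᵀ * B).trace

namespace Matrix

variable {m n α : Type*} [CommRing α]

/-- The Kronecker product `[[δ², δq], [δq, q²]] ⊗ R`, written in block form. -/
def outerBlocks (δ q : α) (R : Matrix n n α) : Matrix (n ⊕ n) (n ⊕ n) α :=
  fromBlocks ((δ ^ 2) • R) ((δ * q) • R) ((δ * q) • R) ((q ^ 2) • R)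

lemma outerBlocks_eq_transpose_mul_mul [Fintype n] [DecidableEq n] (δ q : α)
    (R : Matrix n n α) :
    outerBlocks δ q R =
      (fromCols (δ • (1 : Matrix n n α)) (q • 1))ᵀ * R *
        fromCols (δ • (1 : Matrix n n α)) (q • 1) := by
  ext (i | i) (j | j) <;> simp [outerBlocks, transpose_fromCols, mul_fromCols] <;> ring

lemma outerBlocks_sub (δ q : α) (R R' : Matrix n n α) :
    outerBlocks δ q (R - R') = outerBlocks δ q R - outerBlocks δ q R' := by
  ext (i | i) (j | j) <;> simp [outerBlocks, mul_sub]

lemma outerBlocks_smul (δ q c : α) (R : Matrix n n α) :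
    outerBlocks δ q (c • R) = c • outerBlocks δ q R := by
  ext (i | i) (j | j) <;> simp [outerBlocks, mul_left_comm c]

lemma outerBlocks_vecMulVec (δ q : α) (v : n → α) :
    outerBlocks δ q (vecMulVec v v) =
      vecMulVec (Sum.elim (δ • v) (q • v)) (Sum.elim (δ • v) (q • v)) := by
  ext (i | i) (j | j) <;> simp [outerBlocks, vecMulVec_apply] <;> ring

lemma fromBlocks_zero_smul_vecMulVec (δ q : α) (v : n → α) :
    (fromBlocks 0 (δ • vecMulVec v v) 0 (q • vecMulVec v v) : Matrix (n ⊕ n) (n ⊕ n) α) =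
      vecMulVec (Sum.elim (δ • v) (q • v)) (Sum.elim 0 v) := by
  ext (i | i) (j | j) <;> simp [vecMulVec_apply, mul_assoc]

lemma vecMulVec_mul_mul_transpose [Fintype n] (u v : n → α) (M : Matrix n n α) :
    vecMulVec u v * M * (vecMulVec u v)ᵀ = (v ⬝ᵥ M *ᵥ v) • vecMulVec u u := by
  rw [transpose_vecMulVec, vecMulVec_mul, vecMulVec_mul_vecMulVec, vecMulVec_smul,
    dotProduct_mulVec]

lemma sum_elim_zero_dotProduct_mulVec [Fintype m] [Fintype n] (M : Matrix (m ⊕ n) (m ⊕ n) α)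
    (v : n → α) :
    Sum.elim 0 v ⬝ᵥ M *ᵥ Sum.elim 0 v = v ⬝ᵥ M.toBlocks₂₂ *ᵥ v := by
  simp [dotProduct, mulVec, Fintype.sum_sum_type, toBlocks₂₂]

lemma trace_transpose_fromBlocks_zero_mul [Fintype m] [Fintype n] (S : Matrix n n α)
    (M : Matrix (m ⊕ n) (m ⊕ n) α) :
    ((fromBlocks 0 0 0 S : Matrix (m ⊕ n) (m ⊕ n) α)ᵀ * M).trace =
      (Sᵀ * M.toBlocks₂₂).trace := by
  simp [trace, mul_apply, Fintype.sum_sum_type, toBlocks₂₂]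

lemma PosSemidef.outerBlocks [Fintype n] {R : Matrix n n ℝ} (hR : R.PosSemidef) (δ q : ℝ) :
    (outerBlocks δ q R).PosSemidef := by
  classical
  rw [outerBlocks_eq_transpose_mul_mul]
  exact hR.conjTranspose_mul_mul_same _

lemma integral_outerBlocks {Ω : Type*} [MeasurableSpace Ω] (μ : Measure Ω) (δ q : ℝ)
    (f : Ω → Matrix n n ℝ) :
    (of fun i j => ∫ ω, outerBlocks δ q (f ω) i j ∂μ) =
      outerBlocks δ q (of fun a b => ∫ ω, f ω a b ∂μ) := by
  ext (i | i) (j | j) <;> simp [outerBlocks, integral_const_mul]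

end Matrix

theorem block_fourth_moment_bound_general {d : ℕ} {Ω : Type} [MeasurableSpace Ω]
    (μ : Measure Ω)
    (x : Ω → Fin d → ℝ)
    (S : Matrix (Fin d) (Fin d) ℝ)
    (ψ : ℝ)
    (hmom4 : ∀ A : Matrix (Fin d) (Fin d) ℝ, A.PosSemidef →
      ((ψ * (S * A).trace) • S -
        Matrix.of fun i j => ∫ ω, (x ω ⬝ᵥ A.mulVec (x ω)) * (x ω i * x ω j) ∂μ).PosSemidef)
    (δ q : ℝ)
    (Ghat : Ω → Matrix (Fin d ⊕ Fin d) (Fin d ⊕ Fin d) ℝ)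
    (hGhat : ∀ ω, Ghat ω =
      Matrix.fromBlocks 0 (δ • vecMulVec (x ω) (x ω)) 0 (q • vecMulVec (x ω) (x ω)))
    (M : Matrix (Fin d ⊕ Fin d) (Fin d ⊕ Fin d) ℝ) (hM : M.PosSemidef) :
    ((ψ * traceInner2 (Matrix.fromBlocks 0 0 0 S) M) •
        Matrix.fromBlocks ((δ ^ 2) • S) ((δ * q) • S) ((δ * q) • S) ((q ^ 2) • S) -
      Matrix.of fun i j => ∫ ω, (Ghat ω * M * (Ghat ω)ᵀ) i j ∂μ).PosSemidef := by
  set D := M.toBlocks₂₂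
  have hD : D.PosSemidef := hM.submatrix Sum.inr
  have htrace : traceInner2 (fromBlocks 0 0 0 S) M = (S * D).trace := by
    rw [traceInner2, trace_transpose_fromBlocks_zero_mul, ← trace_transpose_mul,
      ← conjTranspose_eq_transpose_of_trivial D, hD.1, transpose_transpose]
  have hG : ∀ ω, Ghat ω * M * (Ghat ω)ᵀ =
      outerBlocks δ q ((x ω ⬝ᵥ D *ᵥ x ω) • vecMulVec (x ω) (x ω)) := fun ω => by
    rw [hGhat, fromBlocks_zero_smul_vecMulVec, vecMulVec_mul_mul_transpose,
      sum_elim_zero_dotProduct_mulVec, outerBlocks_smul, outerBlocks_vecMulVec]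
  simp_rw [hG, htrace]
  rw [integral_outerBlocks]
  have key := (hmom4 D hD).outerBlocks δ q
  rwa [outerBlocks_sub, outerBlocks_smul] at key

/-- Let `x` be a random vector in `ℝ^d` with `S = E[x xᵀ]` satisfying the
fourth-moment condition `E[x xᵀ A x xᵀ] ⪯ ψ tr(S A) S` for every PSD `A` (`ψ ≥ 1`). For
scalars `δ, q` put `Ĝ = [[0, δ x xᵀ], [0, q x xᵀ]]` (a random `2d × 2d` block matrix). Then
for every PSD `2d × 2d` matrix `M`,
`E[Ĝ M Ĝᵀ] ⪯ ψ · ⟨[[0,0],[0,S]], M⟩ · [[δ² S, δq S], [δq S, q² S]]`. -/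
theorem block_fourth_moment_bound {d : ℕ} {Ω : Type} [MeasurableSpace Ω]
    (μ : Measure Ω) [IsProbabilityMeasure μ]
    (x : Ω → Fin d → ℝ) (hmeas : ∀ i, Measurable fun ω => x ω i)
    (hint2 : ∀ i j, Integrable (fun ω => x ω i * x ω j) μ)
    (hint4 : ∀ i j k l, Integrable (fun ω => x ω i * x ω j * x ω k * x ω l) μ)
    (S : Matrix (Fin d) (Fin d) ℝ)
    (hSdef : S = Matrix.of fun i j => ∫ ω, x ω i * x ω j ∂μ)
    (ψ : ℝ) (hψ : 1 ≤ ψ)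
    (hmom4 : ∀ A : Matrix (Fin d) (Fin d) ℝ, A.PosSemidef →
      ((ψ * (S * A).trace) • S -
        Matrix.of fun i j => ∫ ω, (x ω ⬝ᵥ A.mulVec (x ω)) * (x ω i * x ω j) ∂μ).PosSemidef)
    (δ q : ℝ)
    (Ghat : Ω → Matrix (Fin d ⊕ Fin d) (Fin d ⊕ Fin d) ℝ)
    (hGhat : ∀ ω, Ghat ω =
      Matrix.fromBlocks 0 (δ • vecMulVec (x ω) (x ω)) 0 (q • vecMulVec (x ω) (x ω)))
    (M : Matrix (Fin d ⊕ Fin d) (Fin d ⊕ Fin d) ℝ) (hM : M.PosSemidef) :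
    ((ψ * traceInner2 (Matrix.fromBlocks 0 0 0 S) M) •
        Matrix.fromBlocks ((δ ^ 2) • S) ((δ * q) • S) ((δ * q) • S) ((q ^ 2) • S) -
      Matrix.of fun i j => ∫ ω, (Ghat ω * M * (Ghat ω)ᵀ) i j ∂μ).PosSemidef :=
  block_fourth_moment_bound_general μ x S ψ hmom4 δ q Ghat hGhat M hM

end
end

section
/- Let c ∈ [0,1), 0 < δ ≤ q, and λ ≥ 0, and let x_1 = (1+c−qλ)/2 − √((1+c−qλ)² − 4c(1−δλ))/2 and x_2 = (1+c−qλ)/2 + √((1+c−qλ)² − 4c(1−δλ))/2 be the eigenvalues of A(λ) = [[0, 1−δλ],[−c, 1+c−qλ]]. Then: (i) if λ ∈ I₁ = [0, λ†], x_1 and x_2 are real and x_1 ≤ x_2 ≤ 1 − ((q−cδ)/(1−c))·λ; (ii) if λ ∈ I₂ = (λ†, λ‡), x_1 and x_2 are complex conjugates with |x_1| = |x_2| = √(c(1−δλ)); (iii) if λ ∈ I₃ = [λ‡, ∞), x_1 and x_2 are real and x_1 ≤ x_2 ≤ cδ/q; where λ† = (1−c)²/(√(q−cδ) + √(c(q−δ)))²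 and λ‡ = (1−c)²/(√(q−cδ) − √(c(q−δ)))². -/
/-!
Both eigenvalues are the roots `b/2 ∓ √D/2` of the characteristic polynomial
`p(t) = t² - b t + d` of `A(λ)`, with `b = 1 + c - qλ`, `d = c(1 - δλ)` and discriminant
`D = b² - 4d`. Writing `s = √(q - cδ)` and `v = √(c(q - δ))`, one has `s² - v² = q(1 - c)`, so
`λ† = (s - v)²/q²`, `λ‡ = (s + v)²/q²` and `D = q²(λ - λ†)(λ - λ‡)`: the roots are real outside
`(λ†, λ‡)` and complex conjugate of modulus `√d` inside it. In the real case the larger root is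
at most `t` as soon as `t` lies right of the vertex `b/2` and `p(t) ≥ 0`; for the two bounds
`p(t)` is `(q - cδ) c (q - δ) λ² / (1 - c)²` and `c (1 - δ/q)(1 - cδ/q)` respectively.
-/

open Matrix Real

noncomputable section

/-- The 2×2 momentum matrix `A(λ) = [[0, 1−δλ], [−c, 1+c−qλ]]`. -/
def Amat (c δ q lam : ℝ) : Matrix (Fin 2) (Fin 2) ℝ :=
  !![0, 1 - δ * lam; -c, 1 + c - q * lam]

/-- `x₁ = (1+c−qλ)/2 − √((1+c−qλ)² − 4c(1−δλ))/2`, as a complex number (principal square root). -/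
def eig1 (c δ q lam : ℝ) : ℂ :=
  (((1 + c - q * lam : ℝ) : ℂ)) / 2 -
    ((((1 + c - q * lam) ^ 2 - 4 * c * (1 - δ * lam) : ℝ) : ℂ) ^ ((1 : ℂ) / 2)) / 2

/-- `x₂ = (1+c−qλ)/2 + √((1+c−qλ)² − 4c(1−δλ))/2`, as a complex number (principal square root). -/
def eig2 (c δ q lam : ℝ) : ℂ :=
  (((1 + c - q * lam : ℝ) : ℂ)) / 2 +
    ((((1 + c - q * lam) ^ 2 - 4 * c * (1 - δ * lam) : ℝ) : ℂ) ^ ((1 : ℂ) / 2)) / 2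

/-- `λ† = (1−c)²/(√(q−cδ) + √(c(q−δ)))²`. -/
def lamDagger (c δ q : ℝ) : ℝ :=
  (1 - c) ^ 2 / (Real.sqrt (q - c * δ) + Real.sqrt (c * (q - δ))) ^ 2

/-- `λ‡ = (1−c)²/(√(q−cδ) − √(c(q−δ)))²`. -/
def lamDDagger (c δ q : ℝ) : ℝ :=
  (1 - c) ^ 2 / (Real.sqrt (q - c * δ) - Real.sqrt (c * (q - δ))) ^ 2

open Complex ComplexConjugate

lemma Complex.ofReal_cpow_half_of_nonneg {x : ℝ} (hx : 0 ≤ x) :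
    (x : ℂ) ^ (1 / 2 : ℂ) = (√x : ℝ) := by
  rw [show (1 / 2 : ℂ) = ((1 / 2 : ℝ) : ℂ) by norm_num, ← ofReal_cpow hx, Real.sqrt_eq_rpow]

lemma Complex.ofReal_cpow_half_of_neg {x : ℝ} (hx : x < 0) :
    (x : ℂ) ^ (1 / 2 : ℂ) = (√(-x) : ℝ) * I := by
  rw [ofReal_cpow_of_nonpos hx.le, ← ofReal_neg, ← ofReal_cpow_half_of_nonneg (by linarith),
    show ↑Real.pi * I * (1 / 2 : ℂ) = ((Real.pi / 2 : ℝ) : ℂ) * I by push_cast; ring,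
    exp_mul_I, ← ofReal_cos, ← ofReal_sin, Real.cos_pi_div_two, Real.sin_pi_div_two]
  push_cast
  ring

section QuadraticRoots

variable {b d D t : ℝ}

lemma quadratic_roots_real_of_discr_nonneg (hD : 0 ≤ D) :
    (b : ℂ) / 2 - (D : ℂ) ^ (1 / 2 : ℂ) / 2 = ((b - √D) / 2 : ℝ) ∧
      (b : ℂ) / 2 + (D : ℂ) ^ (1 / 2 : ℂ) / 2 = ((b + √D) / 2 : ℝ) := by
  rw [ofReal_cpow_half_of_nonneg hD]
  constructor <;> push_cast <;> ring

lemma add_sqrt_discr_div_two_le (hD : D = b ^ 2 - 4 * d) (hbt : b ≤ 2 * t)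
    (hpt : 0 ≤ t ^ 2 - b * t + d) : (b + √D) / 2 ≤ t := by
  have : √D ≤ 2 * t - b := (Real.sqrt_le_left (by linarith)).2 (by nlinarith)
  linarith

lemma quadratic_roots_real_le (hD : D = b ^ 2 - 4 * d) (hD0 : 0 ≤ D) (hbt : b ≤ 2 * t)
    (hpt : 0 ≤ t ^ 2 - b * t + d) :
    ((b : ℂ) / 2 - (D : ℂ) ^ (1 / 2 : ℂ) / 2).im = 0 ∧
      ((b : ℂ) / 2 + (D : ℂ) ^ (1 / 2 : ℂ) / 2).im = 0 ∧
      ((b : ℂ) / 2 - (D : ℂ) ^ (1 / 2 : ℂ) / 2).re ≤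
        ((b : ℂ) / 2 + (D : ℂ) ^ (1 / 2 : ℂ) / 2).re ∧
      ((b : ℂ) / 2 + (D : ℂ) ^ (1 / 2 : ℂ) / 2).re ≤ t := by
  obtain ⟨h₁, h₂⟩ := quadratic_roots_real_of_discr_nonneg (b := b) hD0
  simp only [h₁, h₂, ofReal_im, ofReal_re]
  exact ⟨trivial, trivial, by linarith [Real.sqrt_nonneg D], add_sqrt_discr_div_two_le hD hbt hpt⟩

lemma quadratic_roots_conj_of_discr_neg (hD : D = b ^ 2 - 4 * d) (hD0 : D < 0) :
    conj ((b : ℂ) / 2 + (D : ℂ) ^ (1 / 2 : ℂ) / 2) = (b : ℂ) / 2 - (D : ℂ) ^ (1 / 2 : ℂ) / 2 ∧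
      ‖(b : ℂ) / 2 - (D : ℂ) ^ (1 / 2 : ℂ) / 2‖ = √d ∧
      ‖(b : ℂ) / 2 + (D : ℂ) ^ (1 / 2 : ℂ) / 2‖ = √d := by
  have hsq : (b / 2) ^ 2 + (√(-D) / 2) ^ 2 = d := by
    linear_combination (1 / 4 : ℝ) * Real.sq_sqrt (neg_nonneg.2 hD0.le) - (1 / 4 : ℝ) * hD
  rw [ofReal_cpow_half_of_neg hD0]
  refine ⟨?_, ?_, ?_⟩
  · simp only [map_add, map_div₀, map_mul, conj_ofReal, conj_I, map_ofNat]
    ring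
  · rw [show (b : ℂ) / 2 - (√(-D) : ℝ) * I / 2 = ((b / 2 : ℝ) : ℂ) + ((-(√(-D) / 2) : ℝ) : ℂ) * I
      by push_cast; ring, norm_add_mul_I, neg_sq, hsq]
  · rw [show (b : ℂ) / 2 + (√(-D) : ℝ) * I / 2 = ((b / 2 : ℝ) : ℂ) + ((√(-D) / 2 : ℝ) : ℂ) * I
      by push_cast; ring, norm_add_mul_I, hsq]

end QuadraticRoots

section MomentumMatrix

variable {c δ q lam : ℝ}

lemma sqrt_lt_sqrt_sub_mul (hc0 : 0 ≤ c) (hc1 : c < 1) (hδ : 0 < δ) (hδq : δ ≤ q) :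
    √(c * (q - δ)) < √(q - c * δ) :=
  Real.sqrt_lt_sqrt (mul_nonneg hc0 (by linarith)) (by nlinarith)

lemma sqrt_add_mul_sqrt_sub (hc0 : 0 ≤ c) (hc1 : c < 1) (hδ : 0 < δ) (hδq : δ ≤ q) :
    (√(q - c * δ) + √(c * (q - δ))) * (√(q - c * δ) - √(c * (q - δ))) = q * (1 - c) := by
  linear_combination Real.sq_sqrt (show 0 ≤ q - c * δ by nlinarith) -
    Real.sq_sqrt (show 0 ≤ c * (q - δ) by nlinarith)

lemma lamDagger_eq (hc0 : 0 ≤ c) (hc1 : c < 1) (hδ : 0 < δ) (hδq : δ ≤ q) :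
    lamDagger c δ q = (√(q - c * δ) - √(c * (q - δ))) ^ 2 / q ^ 2 := by
  have hvs := sqrt_lt_sqrt_sub_mul hc0 hc1 hδ hδq
  have hv0 := Real.sqrt_nonneg (c * (q - δ))
  rw [lamDagger, div_eq_div_iff (pow_pos (by linarith) 2).ne' (pow_pos (by linarith) 2).ne']
  linear_combination (-(√(q - c * δ) + √(c * (q - δ))) * (√(q - c * δ) - √(c * (q - δ))) -
    q * (1 - c)) * sqrt_add_mul_sqrt_sub hc0 hc1 hδ hδq

lemma lamDDagger_eq (hc0 : 0 ≤ c) (hc1 : c < 1) (hδ : 0 < δ) (hδq : δ ≤ q) :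
    lamDDagger c δ q = (√(q - c * δ) + √(c * (q - δ))) ^ 2 / q ^ 2 := by
  have hvs := sqrt_lt_sqrt_sub_mul hc0 hc1 hδ hδq
  rw [lamDDagger, div_eq_div_iff (pow_pos (sub_pos.2 hvs) 2).ne' (pow_pos (by linarith) 2).ne']
  linear_combination (-(√(q - c * δ) + √(c * (q - δ))) * (√(q - c * δ) - √(c * (q - δ))) -
    q * (1 - c)) * sqrt_add_mul_sqrt_sub hc0 hc1 hδ hδq

lemma momentum_discr_eq (hc0 : 0 ≤ c) (hc1 : c < 1) (hδ : 0 < δ) (hδq : δ ≤ q) :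
    (1 + c - q * lam) ^ 2 - 4 * c * (1 - δ * lam) =
      q ^ 2 * (lam - lamDagger c δ q) * (lam - lamDDagger c δ q) := by
  have hq : q ≠ 0 := by linarith
  rw [lamDagger_eq hc0 hc1 hδ hδq, lamDDagger_eq hc0 hc1 hδ hδq]
  field_simp
  linear_combination 2 * q ^ 2 * lam * Real.sq_sqrt (show 0 ≤ q - c * δ by nlinarith) +
    2 * q ^ 2 * lam * Real.sq_sqrt (show 0 ≤ c * (q - δ) by nlinarith) -
    ((√(q - c * δ) + √(c * (q - δ))) * (√(q - c * δ) - √(c * (q - δ))) + q * (1 - c)) *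
      sqrt_add_mul_sqrt_sub hc0 hc1 hδ hδq

lemma lamDagger_le_lamDDagger (hc0 : 0 ≤ c) (hc1 : c < 1) (hδ : 0 < δ) (hδq : δ ≤ q) :
    lamDagger c δ q ≤ lamDDagger c δ q := by
  rw [lamDagger_eq hc0 hc1 hδ hδq, lamDDagger_eq hc0 hc1 hδ hδq]
  have hvs := sqrt_lt_sqrt_sub_mul hc0 hc1 hδ hδq
  gcongr
  linarith [Real.sqrt_nonneg (c * (q - δ))]

lemma momentum_discr_nonneg_of_le_lamDagger (hc0 : 0 ≤ c) (hc1 : c < 1) (hδ : 0 < δ)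
    (hδq : δ ≤ q) (h : lam ≤ lamDagger c δ q) :
    0 ≤ (1 + c - q * lam) ^ 2 - 4 * c * (1 - δ * lam) := by
  rw [momentum_discr_eq hc0 hc1 hδ hδq]
  exact mul_nonneg_of_nonpos_of_nonpos
    (mul_nonpos_of_nonneg_of_nonpos (sq_nonneg q) (by linarith))
    (by linarith [lamDagger_le_lamDDagger hc0 hc1 hδ hδq])

lemma momentum_discr_neg (hc0 : 0 ≤ c) (hc1 : c < 1) (hδ : 0 < δ) (hδq : δ ≤ q)
    (h₁ : lamDagger c δ q < lam) (h₂ : lam < lamDDagger c δ q) :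
    (1 + c - q * lam) ^ 2 - 4 * c * (1 - δ * lam) < 0 := by
  rw [momentum_discr_eq hc0 hc1 hδ hδq]
  exact mul_neg_of_pos_of_neg (mul_pos (pow_pos (by linarith) 2) (by linarith)) (by linarith)

lemma momentum_discr_nonneg_of_lamDDagger_le (hc0 : 0 ≤ c) (hc1 : c < 1) (hδ : 0 < δ)
    (hδq : δ ≤ q) (h : lamDDagger c δ q ≤ lam) :
    0 ≤ (1 + c - q * lam) ^ 2 - 4 * c * (1 - δ * lam) := by
  rw [momentum_discr_eq hc0 hc1 hδ hδq]
  exact mul_nonneg (mul_nonneg (sq_nonneg q)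
    (by linarith [lamDagger_le_lamDDagger hc0 hc1 hδ hδq])) (by linarith)

lemma momentum_charpoly_eval_one_sub_div_mul (hc1 : c ≠ 1) :
    (1 - (q - c * δ) / (1 - c) * lam) ^ 2 -
        (1 + c - q * lam) * (1 - (q - c * δ) / (1 - c) * lam) + c * (1 - δ * lam) =
      (q - c * δ) * (c * (q - δ)) * lam ^ 2 / (1 - c) ^ 2 := by
  have : 1 - c ≠ 0 := sub_ne_zero.2 hc1.symm
  field_simp
  ring

lemma momentum_charpoly_eval_mul_div (hq : q ≠ 0) :
    (c * δ / q) ^ 2 - (1 + c - q * lam) * (c * δ / q) + c * (1 - δ * lam) =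
      c * (1 - δ / q) * (1 - c * δ / q) := by
  field_simp
  ring

lemma momentum_trace_le_two_mul_of_le_lamDagger (hc0 : 0 ≤ c) (hc1 : c < 1) (hδ : 0 < δ)
    (hδq : δ ≤ q) (h : lam ≤ lamDagger c δ q) :
    1 + c - q * lam ≤ 2 * (1 - (q - c * δ) / (1 - c) * lam) := by
  have hs := Real.sq_sqrt (show 0 ≤ q - c * δ by nlinarith)
  have hv := Real.sq_sqrt (show 0 ≤ c * (q - δ) by nlinarith)
  have hvs := sqrt_lt_sqrt_sub_mul hc0 hc1 hδ hδq
  have hv0 := Real.sqrt_nonneg (c * (q - δ))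
  rw [lamDagger, le_div_iff₀ (pow_pos (by linarith) 2)] at h
  have key : lam * ((q - c * δ) + c * (q - δ)) ≤ (1 - c) ^ 2 := by
    rcases le_total 0 lam with hlam | hlam
    · nlinarith [mul_nonneg (mul_nonneg hlam hv0) (hv0.trans hvs.le)]
    · nlinarith
  have h1c : 0 < 1 - c := by linarith
  rw [← sub_nonneg, show 2 * (1 - (q - c * δ) / (1 - c) * lam) - (1 + c - q * lam) =
    ((1 - c) ^ 2 - lam * ((q - c * δ) + c * (q - δ))) / (1 - c) by field_simp; ring]
  exact div_nonneg (by linarith) h1c.le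

lemma momentum_trace_le_two_mul_of_lamDDagger_le (hc0 : 0 ≤ c) (hc1 : c < 1) (hδ : 0 < δ)
    (hδq : δ ≤ q) (h : lamDDagger c δ q ≤ lam) :
    1 + c - q * lam ≤ 2 * (c * δ / q) := by
  have hq : 0 < q := by linarith
  have hs := Real.sq_sqrt (show 0 ≤ q - c * δ by nlinarith)
  have hv := Real.sq_sqrt (show 0 ≤ c * (q - δ) by nlinarith)
  have hvs := sqrt_lt_sqrt_sub_mul hc0 hc1 hδ hδq
  have hv0 := Real.sqrt_nonneg (c * (q - δ))
  rw [lamDDagger_eq hc0 hc1 hδ hδq, div_le_iff₀ (pow_pos hq 2)] at h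
  have key : q * (1 + c) - 2 * c * δ ≤ q * (q * lam) := by
    nlinarith [mul_nonneg hv0 (hv0.trans hvs.le)]
  rw [mul_div_assoc', le_div_iff₀ hq]
  nlinarith

end MomentumMatrix

theorem momentum_matrix_eigenvalue_bounds_general
    (c δ q lam : ℝ) (hc0 : 0 ≤ c) (hc1 : c < 1) (hδ : 0 < δ) (hδq : δ ≤ q) :
    (lam ≤ lamDagger c δ q →
      (eig1 c δ q lam).im = 0 ∧ (eig2 c δ q lam).im = 0 ∧
      (eig1 c δ q lam).re ≤ (eig2 c δ q lam).re ∧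
      (eig2 c δ q lam).re ≤ 1 - (q - c * δ) / (1 - c) * lam) ∧
    (lamDagger c δ q < lam → lam < lamDDagger c δ q →
      (starRingEnd ℂ) (eig2 c δ q lam) = eig1 c δ q lam ∧
      ‖eig1 c δ q lam‖ = Real.sqrt (c * (1 - δ * lam)) ∧
      ‖eig2 c δ q lam‖ = Real.sqrt (c * (1 - δ * lam))) ∧
    (lamDDagger c δ q ≤ lam →
      (eig1 c δ q lam).im = 0 ∧ (eig2 c δ q lam).im = 0 ∧
      (eig1 c δ q lam).re ≤ (eig2 c δ q lam).re ∧
      (eig2 c δ q lam).re ≤ c * δ / q) := by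
  have hD : (1 + c - q * lam) ^ 2 - 4 * c * (1 - δ * lam) =
      (1 + c - q * lam) ^ 2 - 4 * (c * (1 - δ * lam)) := by ring
  refine ⟨fun h => ?_, fun h₁ h₂ => ?_, fun h => ?_⟩
  · refine quadratic_roots_real_le hD (momentum_discr_nonneg_of_le_lamDagger hc0 hc1 hδ hδq h)
      (momentum_trace_le_two_mul_of_le_lamDagger hc0 hc1 hδ hδq h) ?_
    rw [momentum_charpoly_eval_one_sub_div_mul hc1.ne]
    have : 0 ≤ q - c * δ := by nlinarith
    have : 0 ≤ c * (q - δ) := by nlinarith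
    positivity
  · exact quadratic_roots_conj_of_discr_neg hD (momentum_discr_neg hc0 hc1 hδ hδq h₁ h₂)
  · refine quadratic_roots_real_le hD
      (momentum_discr_nonneg_of_lamDDagger_le hc0 hc1 hδ hδq h)
      (momentum_trace_le_two_mul_of_lamDDagger_le hc0 hc1 hδ hδq h) ?_
    have hq : 0 < q := by linarith
    rw [momentum_charpoly_eval_mul_div hq.ne']
    have : 0 ≤ 1 - δ / q := by rw [sub_nonneg, div_le_one hq]; exact hδq
    have : 0 ≤ 1 - c * δ / q := by rw [sub_nonneg, div_le_one hq]; nlinarith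
    positivity

/-- Characterization of the eigenvalues `x₁, x₂` of the momentum matrix `A(λ)`
on the three intervals `I₁ = [0, λ†]`, `I₂ = (λ†, λ‡)`, `I₃ = [λ‡, ∞)`. -/
theorem momentum_matrix_eigenvalue_bounds
    (c δ q lam : ℝ) (hc0 : 0 ≤ c) (hc1 : c < 1) (hδ : 0 < δ) (hδq : δ ≤ q) (hlam : 0 ≤ lam) :
    (lam ≤ lamDagger c δ q →
      (eig1 c δ q lam).im = 0 ∧ (eig2 c δ q lam).im = 0 ∧
      (eig1 c δ q lam).re ≤ (eig2 c δ q lam).re ∧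
      (eig2 c δ q lam).re ≤ 1 - (q - c * δ) / (1 - c) * lam) ∧
    (lamDagger c δ q < lam → lam < lamDDagger c δ q →
      (starRingEnd ℂ) (eig2 c δ q lam) = eig1 c δ q lam ∧
      ‖eig1 c δ q lam‖ = Real.sqrt (c * (1 - δ * lam)) ∧
      ‖eig2 c δ q lam‖ = Real.sqrt (c * (1 - δ * lam))) ∧
    (lamDDagger c δ q ≤ lam →
      (eig1 c δ q lam).im = 0 ∧ (eig2 c δ q lam).im = 0 ∧
      (eig1 c δ q lam).re ≤ (eig2 c δ q lam).re ∧
      (eig2 c δ q lam).re ≤ c * δ / q) :=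
  momentum_matrix_eigenvalue_bounds_general c δ q lam hc0 hc1 hδ hδq
end
end

section
/- Let c ∈ [0,1), 0 ≤ δ ≤ q with q > cδ, and let P = [[1, −1],[1, −c]] with inverse P^{-1} = (1/(1−c))·[[−c, 1],[−1, 1]]. Then for every λ with 0 ≤ λ ≤ (1−c)²/(q−cδ), the matrix A(λ) = [[0, 1−δλ],[−c, 1+c−qλ]] satisfies ‖P^{-1} A(λ) P‖ ≤ 1, where ‖·‖ is the spectral norm. -/
open Matrix Real

noncomputable section

/-- The change-of-basis matrix `P = [[1, −1], [1, −c]]`. -/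
def Pmat (c : ℝ) : Matrix (Fin 2) (Fin 2) ℝ := !![1, -1; 1, -c]

/-- Its inverse `P⁻¹ = (1/(1−c))·[[−c, 1], [−1, 1]]`. -/
def PmatInv (c : ℝ) : Matrix (Fin 2) (Fin 2) ℝ := (1 / (1 - c)) • !![-c, 1; -1, 1]

/-- The matrix spectral (operator 2-) norm. -/
def specNorm {d : ℕ} (A : Matrix (Fin d) (Fin d) ℝ) : ℝ :=
  ‖Matrix.toEuclideanCLM (𝕜 := ℝ) A‖

/-!
With `u = λ(q − cδ)/(1 − c)` and `v = λ(q − δ)/(1 − c)` the conjugated matrix is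
`B = [[1 − u, cu], [−v, c(1 + v)]]`, and the hypotheses become `0 ≤ v ≤ u ≤ 1 − c`.
`‖B‖ ≤ 1` means that `1 − BᵀB = [[α, β], [β, γ]]` is positive semidefinite, where
`α = 2u − u² − v²`, `β = c(u² + v² − (u − v))`, `γ = 1 − c²(u² + (1 + v)²)`.
Since `c ≤ 1 − u`, both `γ ≥ 0` and `β² ≤ αγ` reduce to polynomial inequalities in `u` and `v` alone.
-/

theorem specNorm_fin_two_le_one {a b c d : ℝ}
    (h : ∀ x y, (a * x + b * y) ^ 2 + (c * x + d * y) ^ 2 ≤ x ^ 2 + y ^ 2) :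
    specNorm !![a, b; c, d] ≤ 1 := by
  refine ContinuousLinearMap.opNorm_le_bound _ zero_le_one fun x => ?_
  rw [one_mul, ← sq_le_sq₀ (norm_nonneg _) (norm_nonneg _), EuclideanSpace.real_norm_sq_eq,
    EuclideanSpace.real_norm_sq_eq]
  simpa [Fin.sum_univ_two, vecHead, vecTail] using h (x 0) (x 1)

theorem quadratic_form_nonneg {α β γ : ℝ} (hα : 0 ≤ α) (hγ : 0 ≤ γ) (hβ : β ^ 2 ≤ α * γ)
    (x y : ℝ) : 0 ≤ α * x ^ 2 + 2 * β * x * y + γ * y ^ 2 := by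
  rcases hα.eq_or_lt with rfl | hα
  · obtain rfl : β = 0 := by nlinarith [sq_nonneg β]
    simp only [zero_mul, mul_zero, zero_add]
    positivity
  · refine nonneg_of_mul_nonneg_right ?_ hα
    nlinarith [sq_nonneg (α * x + β * y), mul_nonneg (sub_nonneg.2 hβ) (sq_nonneg y)]

def conjMomentum (c u v : ℝ) : Matrix (Fin 2) (Fin 2) ℝ := !![1 - u, c * u; -v, c * (1 + v)]

theorem PmatInv_mul_Amat_mul_Pmat {c : ℝ} (hc : c ≠ 1) (δ q lam : ℝ) :
    PmatInv c * Amat c δ q lam * Pmat c =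
      conjMomentum c (lam * (q - c * δ) / (1 - c)) (lam * (q - δ) / (1 - c)) := by
  have h : 1 - c ≠ 0 := sub_ne_zero.2 hc.symm
  ext i j
  fin_cases i <;> fin_cases j <;>
    simp [PmatInv, Amat, Pmat, conjMomentum, Matrix.mul_apply, Fin.sum_univ_two] <;>
    field_simp <;> ring

theorem one_sub_sq_mul_le {u v : ℝ} (hv : 0 ≤ v) (hvu : v ≤ u) (hu : u ≤ 1) :
    (1 - u) ^ 2 * ((u ^ 2 + v ^ 2 - (u - v)) ^ 2 + (2 * u - u ^ 2 - v ^ 2) * (u ^ 2 + (1 + v) ^ 2))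
      ≤ 2 * u - u ^ 2 - v ^ 2 := by
  have hu0 : 0 ≤ u := hv.trans hvu
  have hfactor : 0 ≤ v + u * (2 * (u - 1) ^ 2 + 1) := by positivity
  have hcube : 0 ≤ 2 * u ^ 3 * (1 - u) := mul_nonneg (by positivity) (by linarith)
  have hgap : 2 * u - u ^ 2 - v ^ 2 - (1 - u) ^ 2 * ((u ^ 2 + v ^ 2 - (u - v)) ^ 2 +
      (2 * u - u ^ 2 - v ^ 2) * (u ^ 2 + (1 + v) ^ 2)) =
      (u - v) * (v + u * (2 * (u - 1) ^ 2 + 1)) + 2 * u ^ 3 * (1 - u) := by ring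
  linarith [mul_nonneg (sub_nonneg.2 hvu) hfactor]

section conjMomentum

variable {c u v : ℝ} (hc : 0 ≤ c) (hv : 0 ≤ v) (hvu : v ≤ u) (huc : u + c ≤ 1)
include hc hv hvu huc

theorem conjMomentum_gram_corner_le_one : c ^ 2 * (u ^ 2 + (1 + v) ^ 2) ≤ 1 := by
  have hu0 : 0 ≤ u := hv.trans hvu
  have hu1 : 0 ≤ 1 - u := by linarith
  have hc2 : c ^ 2 ≤ (1 - u) ^ 2 := pow_le_pow_left₀ hc (by linarith) 2
  calc c ^ 2 * (u ^ 2 + (1 + v) ^ 2) ≤ (1 - u) ^ 2 * (u ^ 2 + (1 + u) ^ 2) := by gcongr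
    _ = 1 - u ^ 2 * (1 + 2 * u * (1 - u)) := by ring
    _ ≤ 1 := sub_le_self _ (by positivity)

theorem conjMomentum_gram_det_nonneg :
    (c * (u ^ 2 + v ^ 2 - (u - v))) ^ 2 ≤
      (2 * u - u ^ 2 - v ^ 2) * (1 - c ^ 2 * (u ^ 2 + (1 + v) ^ 2)) := by
  have hu0 : 0 ≤ u := hv.trans hvu
  have hα : 0 ≤ 2 * u - u ^ 2 - v ^ 2 := by nlinarith
  have hK : 0 ≤ (u ^ 2 + v ^ 2 - (u - v)) ^ 2 + (2 * u - u ^ 2 - v ^ 2) * (u ^ 2 + (1 + v) ^ 2) := by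
    positivity
  have hc2 : c ^ 2 ≤ (1 - u) ^ 2 := pow_le_pow_left₀ hc (by linarith) 2
  nlinarith [mul_le_mul_of_nonneg_right hc2 hK, one_sub_sq_mul_le hv hvu (by linarith : u ≤ 1)]

theorem specNorm_conjMomentum_le_one : specNorm (conjMomentum c u v) ≤ 1 := by
  refine specNorm_fin_two_le_one fun x y => ?_
  have hα : 0 ≤ 2 * u - u ^ 2 - v ^ 2 := by nlinarith
  have hform := quadratic_form_nonneg hα
    (sub_nonneg.2 (conjMomentum_gram_corner_le_one hc hv hvu huc))
    (conjMomentum_gram_det_nonneg hc hv hvu huc) x y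
  linarith

end conjMomentum

/-- For `c ∈ [0,1)`, `0 ≤ δ ≤ q` with `q > cδ`, and
`0 ≤ λ ≤ (1−c)²/(q−cδ)`, one has `‖P⁻¹ A(λ) P‖ ≤ 1`. -/
theorem transformed_momentum_matrix_norm_le_one
    (c δ q lam : ℝ) (hc0 : 0 ≤ c) (hc1 : c < 1) (hδ : 0 ≤ δ) (hδq : δ ≤ q)
    (hqcδ : c * δ < q) (hlam0 : 0 ≤ lam) (hlam1 : lam ≤ (1 - c) ^ 2 / (q - c * δ)) :
    specNorm (PmatInv c * Amat c δ q lam * Pmat c) ≤ 1 := by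
  have h1c : 0 < 1 - c := sub_pos.2 hc1
  rw [PmatInv_mul_Amat_mul_Pmat hc1.ne]
  refine specNorm_conjMomentum_le_one hc0 (by positivity) ?_ ?_
  · gcongr
    exact mul_le_of_le_one_left hδ hc1.le
  · have hlam : lam * (q - c * δ) ≤ (1 - c) ^ 2 := (le_div_iff₀ (by linarith)).1 hlam1
    have hu : lam * (q - c * δ) / (1 - c) ≤ 1 - c := by
      rw [div_le_iff₀ h1c]
      nlinarith
    linarith

end
end

section
/- Let S = diag(λ_1,…,λ_d), M = diag(m_1,…,m_d) and R = diag(r_1,…,r_d) with λ_i, m_i > 0 and r_i ≥ 0, let σ² > 0 and n a positive integer, and put S' = M^{-1/2} S M^{-1/2} = diag(λ_i/m_i), R' = M^{-1/2} R M^{-1/2} = diag(r_i/m_i). Then min over A ∈ ℝ^{d×d} of (1/π²)·‖(I−A)ᵀ R' (I−A)‖ + (σ²/n)·⟨R', A (S')^{-1} Aᵀ⟩ equals min over τ ≥ 0 of τ²/π² + Σ_{i ∈ 𝕂_τ} (1 − τ√(m_i/r_i))² · σ² r_i/(n λ_i), where 𝕂_τ = {k : r_k/m_k > τ²}; and this common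 value is at least (1/4) · min over τ ≥ 0 of τ²/π² + Σ_{i ∈ 𝕂_τ} σ² r_i/(n λ_i). -/
/-!
For any `A`, take `τ² = ‖(I - A)ᵀ R' (I - A)‖`. The `i`-th diagonal entry of that matrix is at
least `w i * (1 - A i i)²` with `w i = r i / m i`, so on `𝕂_τ` we get
`A i i ≥ 1 - τ / √(w i) ≥ 0`, while the trace term is at least `(σ²/n) Σ_i w i A i i² m i / λ i`.
Conversely the diagonal `A` with entries `1 - τ / √(w i)` on `𝕂_τ` and `0` elsewhere attains the
`τ`-objective, every diagonal entry of `(I - A)ᵀ R' (I - A)` being at most `τ²`.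
The factor `1/4` compares `τ` with `2τ`: on `𝕂_{2τ}` one has `τ / √(w i) < 1/2`.
-/

open Matrix Real

noncomputable section

/-- The trace inner product `⟨A, B⟩ = tr (Aᵀ B)`. -/
def traceInner {d : ℕ} (A B : Matrix (Fin d) (Fin d) ℝ) : ℝ := (Aᵀ * B).trace

open Finset

section Scalar

variable {τ w : ℝ}

theorem sq_mul_sqrt_inv (τ : ℝ) (hw : 0 ≤ w) : (τ * √w⁻¹) ^ 2 = τ ^ 2 / w := by
  rw [mul_pow, Real.sq_sqrt (inv_nonneg.mpr hw), div_eq_mul_inv]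

theorem one_sub_mul_sqrt_inv_sq_le_sq {a : ℝ} (hτ : 0 ≤ τ) (hτw : τ ^ 2 < w)
    (h : w * (1 - a) ^ 2 ≤ τ ^ 2) : (1 - τ * √w⁻¹) ^ 2 ≤ a ^ 2 := by
  have hw : 0 < w := (sq_nonneg τ).trans_lt hτw
  set t := τ * √w⁻¹
  have ht : 0 ≤ t := by positivity
  have ht2 : t ^ 2 = τ ^ 2 / w := sq_mul_sqrt_inv τ hw.le
  have ht1 : t ^ 2 < 1 := by rw [ht2, div_lt_one hw]; exact hτw
  have ha : (1 - a) ^ 2 ≤ t ^ 2 := by rw [ht2, le_div_iff₀ hw]; linarith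
  have ht1' : t < 1 := by nlinarith
  have hat : 1 - t ≤ a := by linarith [(abs_le_of_sq_le_sq' ha ht).2]
  exact pow_le_pow_left₀ (by linarith) hat 2

theorem quarter_le_one_sub_mul_sqrt_inv_sq (hτ : 0 ≤ τ) (hτw : (2 * τ) ^ 2 < w) :
    1 / 4 ≤ (1 - τ * √w⁻¹) ^ 2 := by
  have hw : 0 < w := (sq_nonneg _).trans_lt hτw
  set t := τ * √w⁻¹
  have ht : 0 ≤ t := by positivity
  have ht2 : t ^ 2 = τ ^ 2 / w := sq_mul_sqrt_inv τ hw.le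
  have h2t : (2 * t) ^ 2 < 1 := by
    rw [mul_pow, ht2, mul_div_assoc', div_lt_one hw, ← mul_pow]
    exact hτw
  nlinarith

end Scalar

section MatrixFacts

variable {d : ℕ}

open scoped Matrix.Norms.L2Operator in
theorem specNorm_diagonal (v : Fin d → ℝ) : specNorm (diagonal v) = ‖v‖ :=
  l2_opNorm_diagonal v

theorem specNorm_nonneg (N : Matrix (Fin d) (Fin d) ℝ) : 0 ≤ specNorm N := norm_nonneg _

open scoped RealInnerProductSpace in
theorem abs_apply_le_specNorm (N : Matrix (Fin d) (Fin d) ℝ) (i j : Fin d) :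
    |N i j| ≤ specNorm N := by
  let e : Fin d → EuclideanSpace ℝ (Fin d) := fun k => EuclideanSpace.single k 1
  have he : ∀ k, ‖e k‖ = 1 := fun k => by simp [e]
  have hN : N i j = ⟪e i, toEuclideanCLM (𝕜 := ℝ) N (e j)⟫ := by
    rw [inner_toEuclideanCLM]; simp [e]
  calc |N i j| ≤ ‖e i‖ * ‖toEuclideanCLM (𝕜 := ℝ) N (e j)‖ := hN ▸ abs_real_inner_le_norm _ _
    _ ≤ ‖e i‖ * (specNorm N * ‖e j‖) := by gcongr; exact ContinuousLinearMap.le_opNorm _ _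
    _ = specNorm N := by rw [he, he, one_mul, mul_one]

theorem transpose_mul_diagonal_mul_apply_self {ι R : Type*} [Fintype ι] [DecidableEq ι]
    [CommSemiring R] (B : Matrix ι ι R) (w : ι → R) (i : ι) :
    (Bᵀ * diagonal w * B) i i = ∑ k, w k * B k i ^ 2 := by
  rw [mul_apply]
  exact sum_congr rfl fun k _ => by rw [mul_diagonal, transpose_apply]; ring

theorem traceInner_diagonal_mul_diagonal_mul_transpose (w u : Fin d → ℝ)
    (A : Matrix (Fin d) (Fin d) ℝ) :
    traceInner (diagonal w) (A * diagonal u * Aᵀ) = ∑ i, w i * ∑ j, u j * A i j ^ 2 := by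
  have h i : (A * diagonal u * Aᵀ) i i = ∑ j, u j * A i j ^ 2 := by
    simpa using transpose_mul_diagonal_mul_apply_self Aᵀ u i
  simp only [traceInner, diagonal_transpose, trace, diag_apply, diagonal_mul, h]

theorem sum_mul_diag_sq_mul_le_traceInner {w u : Fin d → ℝ} (hw : ∀ i, 0 ≤ w i)
    (hu : ∀ i, 0 ≤ u i) (A : Matrix (Fin d) (Fin d) ℝ) :
    ∑ i, w i * A i i ^ 2 * u i ≤ traceInner (diagonal w) (A * diagonal u * Aᵀ) := by
  rw [traceInner_diagonal_mul_diagonal_mul_transpose]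
  refine sum_le_sum fun i _ => ?_
  rw [mul_assoc, mul_comm (A i i ^ 2)]
  exact mul_le_mul_of_nonneg_left
    (single_le_sum (f := fun j => u j * A i j ^ 2) (fun j _ => by have := hu j; positivity)
      (mem_univ i)) (hw i)

end MatrixFacts

section Threshold

variable {ι : Type*} [Fintype ι] (w c : ι → ℝ)

def thresholdObjective (τ : ℝ) : ℝ :=
  τ ^ 2 / π ^ 2 + ∑ i ∈ univ.filter (fun i => w i > τ ^ 2), (1 - τ * √(w i)⁻¹) ^ 2 * c i

def thresholdBound (τ : ℝ) : ℝ :=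
  τ ^ 2 / π ^ 2 + ∑ i ∈ univ.filter (fun i => w i > τ ^ 2), c i

variable {w c}

theorem thresholdBound_nonneg (hc : ∀ i, 0 ≤ c i) (τ : ℝ) : 0 ≤ thresholdBound w c τ :=
  add_nonneg (by positivity) (sum_nonneg fun i _ => hc i)

theorem quarter_mul_thresholdBound_two_mul_le (hc : ∀ i, 0 ≤ c i) {τ : ℝ} (hτ : 0 ≤ τ) :
    1 / 4 * thresholdBound w c (2 * τ) ≤ thresholdObjective w c τ := by
  have hsub : univ.filter (fun i => w i > (2 * τ) ^ 2) ⊆ univ.filter (fun i => w i > τ ^ 2) := by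
    intro i hi
    rw [mem_filter] at hi ⊢
    exact ⟨hi.1, by nlinarith [hi.2]⟩
  rw [thresholdBound, thresholdObjective, mul_add, mul_sum]
  gcongr ?_ + ?_
  · exact le_of_eq (by ring)
  calc ∑ i ∈ univ.filter (fun i => w i > (2 * τ) ^ 2), 1 / 4 * c i
      ≤ ∑ i ∈ univ.filter (fun i => w i > (2 * τ) ^ 2), (1 - τ * √(w i)⁻¹) ^ 2 * c i :=
        sum_le_sum fun i hi => mul_le_mul_of_nonneg_right
          (quarter_le_one_sub_mul_sqrt_inv_sq hτ (mem_filter.mp hi).2) (hc i)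
    _ ≤ _ := sum_le_sum_of_subset_of_nonneg hsub fun i _ _ => by have := hc i; positivity

theorem quarter_mul_sInf_thresholdBound_le (hc : ∀ i, 0 ≤ c i) :
    1 / 4 * sInf {x | ∃ τ, 0 ≤ τ ∧ x = thresholdBound w c τ} ≤
      sInf {x | ∃ τ, 0 ≤ τ ∧ x = thresholdObjective w c τ} := by
  refine le_csInf ⟨_, 0, le_rfl, rfl⟩ ?_
  rintro _ ⟨τ, hτ, rfl⟩
  calc 1 / 4 * sInf {x | ∃ τ, 0 ≤ τ ∧ x = thresholdBound w c τ}
      ≤ 1 / 4 * thresholdBound w c (2 * τ) := by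
        gcongr
        refine csInf_le ⟨0, ?_⟩ ⟨2 * τ, by positivity, rfl⟩
        rintro _ ⟨τ', -, rfl⟩
        exact thresholdBound_nonneg hc τ'
    _ ≤ thresholdObjective w c τ := quarter_mul_thresholdBound_two_mul_le hc hτ

end Threshold

section DiagonalObjective

variable {d : ℕ} (w u : Fin d → ℝ) (κ : ℝ)

/-- `w`, `u` and `κ` stand for the diagonals of `R'` and `S'⁻¹` and for `σ²/n`. -/
def diagonalObjective (A : Matrix (Fin d) (Fin d) ℝ) : ℝ :=
  1 / π ^ 2 * specNorm ((1 - A)ᵀ * diagonal w * (1 - A)) +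
    κ * traceInner (diagonal w) (A * diagonal u * Aᵀ)

def thresholdShrinkage (τ : ℝ) (i : Fin d) : ℝ :=
  if w i > τ ^ 2 then 1 - τ * √(w i)⁻¹ else 0

variable {w u κ}

theorem exists_thresholdObjective_le_diagonalObjective (hw : ∀ i, 0 ≤ w i)
    (hu : ∀ i, 0 ≤ u i) (hκ : 0 ≤ κ) (A : Matrix (Fin d) (Fin d) ℝ) :
    ∃ τ, 0 ≤ τ ∧ thresholdObjective w (fun i => κ * w i * u i) τ ≤ diagonalObjective w u κ A := by
  set N := (1 - A)ᵀ * diagonal w * (1 - A)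
  set τ := √(specNorm N)
  have hτ : τ ^ 2 = specNorm N := Real.sq_sqrt (specNorm_nonneg N)
  have hdiag : ∀ i, w i > τ ^ 2 → (1 - τ * √(w i)⁻¹) ^ 2 ≤ A i i ^ 2 := fun i hi =>
    one_sub_mul_sqrt_inv_sq_le_sq (Real.sqrt_nonneg _) hi <| calc
      w i * (1 - A i i) ^ 2 ≤ N i i := by
        simp only [N, transpose_mul_diagonal_mul_apply_self]
        simpa using single_le_sum (f := fun k => w k * (1 - A) k i ^ 2)
          (fun k _ => by have := hw k; positivity) (mem_univ i)
      _ ≤ τ ^ 2 := hτ ▸ (le_abs_self _).trans (abs_apply_le_specNorm N i i)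
  refine ⟨τ, Real.sqrt_nonneg _, add_le_add (le_of_eq (by rw [hτ]; ring)) ?_⟩
  calc ∑ i ∈ univ.filter (fun i => w i > τ ^ 2), (1 - τ * √(w i)⁻¹) ^ 2 * (κ * w i * u i)
      ≤ ∑ i ∈ univ.filter (fun i => w i > τ ^ 2), A i i ^ 2 * (κ * w i * u i) :=
        sum_le_sum fun i hi => mul_le_mul_of_nonneg_right (hdiag i (mem_filter.mp hi).2)
          (by have := hw i; have := hu i; positivity)
    _ ≤ ∑ i, A i i ^ 2 * (κ * w i * u i) :=
        sum_le_sum_of_subset_of_nonneg (filter_subset _ _)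
          fun i _ _ => by have := hw i; have := hu i; positivity
    _ = κ * ∑ i, w i * A i i ^ 2 * u i := by rw [mul_sum]; exact sum_congr rfl fun i _ => by ring
    _ ≤ κ * traceInner (diagonal w) (A * diagonal u * Aᵀ) :=
        mul_le_mul_of_nonneg_left (sum_mul_diag_sq_mul_le_traceInner hw hu A) hκ

theorem diagonalObjective_thresholdShrinkage_le (hw : ∀ i, 0 ≤ w i) (τ : ℝ) :
    diagonalObjective w u κ (diagonal (thresholdShrinkage w τ)) ≤
      thresholdObjective w (fun i => κ * w i * u i) τ := by
  set a := thresholdShrinkage w τ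
  have hN : (1 - diagonal a)ᵀ * diagonal w * (1 - diagonal a) =
      diagonal fun i => (1 - a i) ^ 2 * w i := by
    rw [← diagonal_one, diagonal_sub, diagonal_transpose, diagonal_mul_diagonal,
      diagonal_mul_diagonal]
    exact congrArg diagonal (funext fun i => by ring)
  have hspec : specNorm (diagonal fun i => (1 - a i) ^ 2 * w i) ≤ τ ^ 2 := by
    rw [specNorm_diagonal, pi_norm_le_iff_of_nonneg (sq_nonneg τ)]
    intro i
    rw [Real.norm_of_nonneg (by have := hw i; positivity)]
    by_cases hi : w i > τ ^ 2
    · simp only [a, thresholdShrinkage, if_pos hi, sub_sub_cancel, sq_mul_sqrt_inv τ (hw i)]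
      exact (div_mul_cancel₀ _ ((sq_nonneg τ).trans_lt hi).ne').le
    · simpa [a, thresholdShrinkage, hi] using not_lt.mp hi
  have htr : κ * traceInner (diagonal w) (diagonal a * diagonal u * (diagonal a)ᵀ) =
      ∑ i ∈ univ.filter (fun i => w i > τ ^ 2), (1 - τ * √(w i)⁻¹) ^ 2 * (κ * w i * u i) := by
    rw [traceInner_diagonal_mul_diagonal_mul_transpose, sum_filter, mul_sum]
    refine sum_congr rfl fun i _ => ?_
    rw [sum_eq_single i (fun j _ hj => by simp [diagonal_apply_ne _ hj.symm]) (by simp)]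
    by_cases hi : w i > τ ^ 2
    · simp [a, thresholdShrinkage, hi]
      ring
    · simp [a, thresholdShrinkage, hi]
  rw [diagonalObjective, thresholdObjective, hN, htr]
  gcongr ?_ + _
  rw [div_eq_mul_one_div (τ ^ 2), mul_comm (τ ^ 2)]
  gcongr

theorem sInf_diagonalObjective_eq (hw : ∀ i, 0 ≤ w i) (hu : ∀ i, 0 ≤ u i) (hκ : 0 ≤ κ) :
    sInf {x | ∃ A, x = diagonalObjective w u κ A} =
      sInf {x | ∃ τ, 0 ≤ τ ∧ x = thresholdObjective w (fun i => κ * w i * u i) τ} := by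
  refine csInf_eq_csInf_of_forall_exists_le ?_ ?_
  · rintro _ ⟨A, rfl⟩
    obtain ⟨τ, hτ, hle⟩ := exists_thresholdObjective_le_diagonalObjective hw hu hκ A
    exact ⟨_, ⟨τ, hτ, rfl⟩, hle⟩
  · rintro _ ⟨τ, -, rfl⟩
    exact ⟨_, ⟨_, rfl⟩, diagonalObjective_thresholdShrinkage_le hw τ⟩

end DiagonalObjective

theorem diagonal_lower_bound_reduction_general {d : ℕ}
    (lam m r : Fin d → ℝ)
    (hlam : ∀ i, 0 < lam i) (hm : ∀ i, 0 < m i) (hr : ∀ i, 0 ≤ r i)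
    (σ2 : ℝ) (hσ2 : 0 < σ2) (n : ℕ)
    (S' R' : Matrix (Fin d) (Fin d) ℝ)
    (hS' : S' = Matrix.diagonal fun i => lam i / m i)
    (hR' : R' = Matrix.diagonal fun i => r i / m i) :
    sInf {x : ℝ | ∃ A : Matrix (Fin d) (Fin d) ℝ,
        x = (1 / Real.pi ^ 2) * specNorm ((1 - A)ᵀ * R' * (1 - A)) +
          (σ2 / n) * traceInner R' (A * S'⁻¹ * Aᵀ)} =
      sInf {x : ℝ | ∃ τ : ℝ, 0 ≤ τ ∧
        x = τ ^ 2 / Real.pi ^ 2 +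
          ∑ i ∈ Finset.univ.filter (fun i : Fin d => r i / m i > τ ^ 2),
            (1 - τ * Real.sqrt (m i / r i)) ^ 2 * (σ2 * r i / (n * lam i))} ∧
    sInf {x : ℝ | ∃ A : Matrix (Fin d) (Fin d) ℝ,
        x = (1 / Real.pi ^ 2) * specNorm ((1 - A)ᵀ * R' * (1 - A)) +
          (σ2 / n) * traceInner R' (A * S'⁻¹ * Aᵀ)} ≥
      (1 / 4) * sInf {x : ℝ | ∃ τ : ℝ, 0 ≤ τ ∧
        x = τ ^ 2 / Real.pi ^ 2 +
          ∑ i ∈ Finset.univ.filter (fun i : Fin d => r i / m i > τ ^ 2),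
            σ2 * r i / (n * lam i)} := by
  have hinv : (diagonal fun i => lam i / m i)⁻¹ = diagonal fun i => m i / lam i :=
    inv_eq_left_inv <| by
      rw [diagonal_mul_diagonal, ← diagonal_one]
      exact congrArg diagonal (funext fun i => by field_simp [(hm i).ne', (hlam i).ne'])
  have hc : ∀ i, σ2 * r i / (n * lam i) = σ2 / n * (r i / m i) * (m i / lam i) := fun i => by
    field_simp [(hm i).ne']
  have hs : ∀ i, m i / r i = (r i / m i)⁻¹ := fun i => (inv_div _ _).symm
  have hw : ∀ i, 0 ≤ r i / m i := fun i => div_nonneg (hr i) (hm i).le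
  have hu : ∀ i, 0 ≤ m i / lam i := fun i => div_nonneg (hm i).le (hlam i).le
  have hκ : 0 ≤ σ2 / n := by positivity
  subst hS' hR'
  simp only [hinv, hc, hs]
  have h := sInf_diagonalObjective_eq hw hu hκ
  have hc_nonneg : ∀ i, 0 ≤ σ2 / n * (r i / m i) * (m i / lam i) := fun i =>
    mul_nonneg (mul_nonneg hκ (hw i)) (hu i)
  exact ⟨h, (quarter_mul_sInf_thresholdBound_le hc_nonneg).trans_eq h.symm⟩

/-- Diagonal reduction of the minimax objective. With
`S' = diag(λ_i/m_i)` and `R' = diag(r_i/m_i)`, the minimum over `A ∈ ℝ^{d×d}` of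
`(1/π²)·‖(I−A)ᵀ R' (I−A)‖ + (σ²/n)·⟨R', A (S')⁻¹ Aᵀ⟩` equals the minimum over `τ ≥ 0` of
`τ²/π² + Σ_{i ∈ 𝕂_τ} (1 − τ√(m_i/r_i))² σ² r_i/(n λ_i)`, `𝕂_τ = {k : r_k/m_k > τ²}`, and
this common value is at least `(1/4)·min_{τ ≥ 0} (τ²/π² + Σ_{i ∈ 𝕂_τ} σ² r_i/(n λ_i))`. -/
theorem diagonal_lower_bound_reduction {d : ℕ}
    (lam m r : Fin d → ℝ)
    (hlam : ∀ i, 0 < lam i) (hm : ∀ i, 0 < m i) (hr : ∀ i, 0 ≤ r i)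
    (σ2 : ℝ) (hσ2 : 0 < σ2) (n : ℕ) (hn : 0 < n)
    (S' R' : Matrix (Fin d) (Fin d) ℝ)
    (hS' : S' = Matrix.diagonal fun i => lam i / m i)
    (hR' : R' = Matrix.diagonal fun i => r i / m i) :
    sInf {x : ℝ | ∃ A : Matrix (Fin d) (Fin d) ℝ,
        x = (1 / Real.pi ^ 2) * specNorm ((1 - A)ᵀ * R' * (1 - A)) +
          (σ2 / n) * traceInner R' (A * S'⁻¹ * Aᵀ)} =
      sInf {x : ℝ | ∃ τ : ℝ, 0 ≤ τ ∧
        x = τ ^ 2 / Real.pi ^ 2 +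
          ∑ i ∈ Finset.univ.filter (fun i : Fin d => r i / m i > τ ^ 2),
            (1 - τ * Real.sqrt (m i / r i)) ^ 2 * (σ2 * r i / (n * lam i))} ∧
    sInf {x : ℝ | ∃ A : Matrix (Fin d) (Fin d) ℝ,
        x = (1 / Real.pi ^ 2) * specNorm ((1 - A)ᵀ * R' * (1 - A)) +
          (σ2 / n) * traceInner R' (A * S'⁻¹ * Aᵀ)} ≥
      (1 / 4) * sInf {x : ℝ | ∃ τ : ℝ, 0 ≤ τ ∧
        x = τ ^ 2 / Real.pi ^ 2 +
          ∑ i ∈ Finset.univ.filter (fun i : Fin d => r i / m i > τ ^ 2),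
            σ2 * r i / (n * lam i)} :=
  diagonal_lower_bound_reduction_general lam m r hlam hm hr σ2 hσ2 n S' R' hS' hR'

end
end
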